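/- Every inference rule of system SKS (atomic interaction ai↓, atomic cut ai↑, switch s, contraction c↓, cocontraction c↑, weakening w↓, coweakening w↑) is sound: if the premise evaluates to true under an assignment, then the conclusion evaluates to true under that assignment. Consequently every structure provable in SKS is a boolean tautology. -/

import Mathlib

/-- Structures of system SKS. -/
inductive Str : Type
  | f : Str
  | t : Str
  | atom (n : ℕ) : Str
  | or (A B : Str) : Str
  | and (A B : Str) : Str
  | neg (A : Str) : Str

/-- Positive contexts: a structure with one hole, not under a negation. -/
inductive Ctx : Type
  | hole : Ctx
  | orl (S : Ctx) (T : Str) : Ctx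
  | orr (T : Str) (S : Ctx) : Ctx
  | andl (S : Ctx) (T : Str) : Ctx
  | andr (T : Str) (S : Ctx) : Ctx

def Ctx.fill : Ctx → Str → Str
  | .hole, R => R
  | .orl S T, R => .or (S.fill R) T
  | .orr T S, R => .or T (S.fill R)
  | .andl S T, R => .and (S.fill R) T
  | .andr T S, R => .and T (S.fill R)

/-- Structural equivalence `=` of SKS. -/
inductive equiv : Str → Str → Prop
  | refl (R) : equiv R R
  | symm {A B} : equiv A B → equiv B A
  | trans {A B C} : equiv A B → equiv B C → equiv A C
  | or_congr {A B C D} : equiv A B → equiv C D → equiv (.or A C) (.or B D)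
  | and_congr {A B C D} : equiv A B → equiv C D → equiv (.and A C) (.and B D)
  | neg_congr {A B} : equiv A B → equiv (.neg A) (.neg B)
  | or_assoc (A B C) : equiv (.or (.or A B) C) (.or A (.or B C))
  | or_comm (A B) : equiv (.or A B) (.or B A)
  | and_assoc (A B C) : equiv (.and (.and A B) C) (.and A (.and B C))
  | and_comm (A B) : equiv (.and A B) (.and B A)
  | dm_or (A B) : equiv (.neg (.or A B)) (.and (.neg A) (.neg B))
  | dm_and (A B) : equiv (.neg (.and A B)) (.or (.neg A) (.neg B))
  | neg_neg (A) : equiv (.neg (.neg A)) A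
  | neg_f : equiv (.neg .f) .t
  | neg_t : equiv (.neg .t) .f
  | or_f (R) : equiv (.or .f R) R
  | and_t (R) : equiv (.and .t R) R
  | or_t_t : equiv (.or .t .t) .t
  | and_f_f : equiv (.and .f .f) .f

/-- One inference step of SKS, applied in an arbitrary positive context. -/
inductive step : Str → Str → Prop
  | ai_down (S : Ctx) (a : ℕ) :
      step (S.fill .t) (S.fill (.or (.atom a) (.neg (.atom a))))
  | ai_up (S : Ctx) (a : ℕ) :
      step (S.fill (.and (.atom a) (.neg (.atom a)))) (S.fill .f)
  | s (S : Ctx) (R U T : Str) :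
      step (S.fill (.and (.or R U) T)) (S.fill (.or (.and R T) U))
  | c_down (S : Ctx) (R : Str) : step (S.fill (.or R R)) (S.fill R)
  | c_up (S : Ctx) (R : Str) : step (S.fill R) (S.fill (.and R R))
  | w_down (S : Ctx) (R : Str) : step (S.fill .f) (S.fill R)
  | w_up (S : Ctx) (R : Str) : step (S.fill R) (S.fill .t)

/-- Derivations in SKS: chains of rule instances and equivalence steps. -/
inductive Deriv : Str → Str → Prop
  | refl (R) : Deriv R R
  | step {A B C} : step A B → Deriv B C → Deriv A C
  | eq {A B C} : equiv A B → Deriv B C → Deriv A C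

/-- Boolean evaluation of structures. -/
def eval (v : ℕ → Bool) : Str → Bool
  | .f => false
  | .t => true
  | .atom n => v n
  | .or A B => eval v A || eval v B
  | .and A B => eval v A && eval v B
  | .neg A => !(eval v A)

theorem Ctx.eval_fill_mono (S : Ctx) {A B : Str} {v : ℕ → Bool}
    (h : eval v A = true → eval v B = true) :
    eval v (S.fill A) = true → eval v (S.fill B) = true := by
  induction S with
  | hole => exact h
  | orl S T ih =>
    simp only [Ctx.fill, eval, Bool.or_eq_true]
    exact Or.imp ih id
  | orr T S ih =>
    simp only [Ctx.fill, eval, Bool.or_eq_true]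
    exact Or.imp id ih
  | andl S T ih =>
    simp only [Ctx.fill, eval, Bool.and_eq_true]
    exact And.imp ih id
  | andr T S ih =>
    simp only [Ctx.fill, eval, Bool.and_eq_true]
    exact And.imp id ih

theorem equiv.eval_eq {A B : Str} (h : equiv A B) (v : ℕ → Bool) :
    eval v A = eval v B := by
  induction h with
  | refl => rfl
  | symm _ ih => exact ih.symm
  | trans _ _ ih₁ ih₂ => exact ih₁.trans ih₂
  | or_congr _ _ ih₁ ih₂ | and_congr _ _ ih₁ ih₂ => simp only [eval, ih₁, ih₂]
  | neg_congr _ ih => simp only [eval, ih]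
  | or_assoc => exact Bool.or_assoc ..
  | or_comm => exact Bool.or_comm ..
  | and_assoc => exact Bool.and_assoc ..
  | and_comm => exact Bool.and_comm ..
  | dm_or => exact Bool.not_or ..
  | dm_and => exact Bool.not_and ..
  | neg_neg => exact Bool.not_not _
  | neg_f | neg_t | or_f | and_t | or_t_t | and_f_f => simp [eval]

-- At its hole, every rule is a boolean tautology `premise → conclusion`.
theorem step.sound {A B : Str} (h : step A B) (v : ℕ → Bool) :
    eval v A = true → eval v B = true := by
  cases h <;> refine Ctx.eval_fill_mono _ ?_
  case s R U T =>
    simp only [eval, Bool.and_eq_true, Bool.or_eq_true]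
    rintro ⟨hR | hU, hT⟩
    exacts [Or.inl ⟨hR, hT⟩, Or.inr hU]
  all_goals simp [eval]

theorem Deriv.sound {A B : Str} (h : Deriv A B) (v : ℕ → Bool) :
    eval v A = true → eval v B = true := by
  induction h with
  | refl => exact id
  | step hs _ ih => exact ih ∘ hs.sound v
  | eq he _ ih => exact ih ∘ (he.eval_eq v ▸ ·)

theorem sks_sound :
    (∀ A B : Str, step A B → ∀ v : ℕ → Bool, eval v A = true → eval v B = true) ∧
    (∀ R : Str, Deriv .t R → ∀ v : ℕ → Bool, eval v R = true) := by
  exact ⟨fun _ _ h v => h.sound v, fun _ h v => h.sound v rfl⟩
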